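/- Let z be a schedule safe at state c, and let L and L' be two linearizations of po_c(z) that are identical except that two adjacent invocations (f_a, r_a) and (f_b, r_b) are swapped, both linearizations respecting ≼_z. Then the composite mutations of L and L' are equivalent. -/
import Mathlib


/-!
# Core ECS

A formalization of the Core ECS calculus: entities `E`, component labels `I`,
component types `K i`, states (indexed partial maps from entities to component
values, together with the set of previously used entities), mutations with a
fresh-entity constructor `ν`, queries, systems, schedules, influence,
safety and determinism.

Freshness is modeled by a *fresh-entity oracle* `φ : ECSState → E` which, when
valid, always picks an entity that is neither live nor previously used; since
after each `ν` the chosen entity is recorded as used, an oracle can realize any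
choice of fresh entities.  Two mutations are equivalent when, at every state,
fresh entities can be (correlatedly) chosen for both so that the resulting
states coincide.

The "consistent but unspecified total order" on the entity matches of a query
vector is modeled by an enumeration parameter `en`, valid when it lists,
without duplicates, exactly the matches of the query-vector semantics.
-/

namespace CoreECS

open Classical

/-- Mutations over entity type `E`, component labels `I`, and component types `K`. -/
inductive Mut (E I : Type) (K : I → Type) : Type where
  | attach : (i : I) → E → K i → Mut E I K
  | detach : I → E → Mut E I K
  | comp : Mut E I K → Mut E I K → Mut E I K
  | nil : Mut E I K
  | nu : (E → Mut E I K) → Mut E I K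

/-- The state of an ECS program: for each label `i`, a partial map `E ⇀ K i`,
plus the record of entities ever used (for freshness). -/
structure ECSState (E I : Type) (K : I → Type) : Type where
  comp : ∀ i : I, E → Option (K i)
  used : Set E

/-- The live entities of a state: those with at least one component attached. -/
def live {E I : Type} {K : I → Type} (c : ECSState E I K) : Set E :=
  {e | ∃ i, c.comp i e ≠ none}

/-- Update the partial map at label `i` and entity `e` to `v`. -/
noncomputable def ECSState.setComp {E I : Type} {K : I → Type}
    (c : ECSState E I K) (i : I) (e : E) (v : Option (K i)) : ECSState E I K where
  comp := fun j e' => if h : i = j then (if e' = e then h ▸ v else c.comp j e') else c.comp j e'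
  used := c.used

/-- Record an entity as used. -/
def ECSState.markUsed {E I : Type} {K : I → Type} (c : ECSState E I K) (e : E) :
    ECSState E I K :=
  { c with used := insert e c.used }

/-- A fresh-entity oracle: chooses an entity at each state. -/
abbrev FreshOracle (E I : Type) (K : I → Type) : Type := ECSState E I K → E

/-- A valid oracle picks entities that are neither live nor previously used. -/
def ValidOracle {E I : Type} {K : I → Type} (φ : FreshOracle E I K) : Prop :=
  ∀ c, φ c ∉ live c ∧ φ c ∉ c.used

/-- Interpretation `c ↓ m` of a mutation against a state, relative to a fresh-entity
oracle `φ` resolving the `ν` constructors. -/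
noncomputable def applyMut {E I : Type} {K : I → Type} (φ : FreshOracle E I K) :
    ECSState E I K → Mut E I K → ECSState E I K
  | c, .attach i e k => c.setComp i e (some k)
  | c, .detach i e => c.setComp i e none
  | c, .comp m m' => applyMut φ (applyMut φ c m) m'
  | c, .nil => c
  | c, .nu f => applyMut φ (c.markUsed (φ c)) (f (φ c))

/-- Mutations `m ≃ m'`: for every state, fresh entities can be (correlatedly)
chosen for both so that the interpretations agree. -/
def MutEquiv {E I : Type} {K : I → Type} (m m' : Mut E I K) : Prop :=
  ∀ c : ECSState E I K, ∃ φ φ' : FreshOracle E I K,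
    ValidOracle φ ∧ ValidOracle φ' ∧ applyMut φ c m = applyMut φ' c m'

/-- Mutations commute when `m • m' ≃ m' • m`. -/
def MutCommute {E I : Type} {K : I → Type} (m m' : Mut E I K) : Prop :=
  MutEquiv (m.comp m') (m'.comp m)

/-- The influence `infl(m) ⊆ E × I` of a mutation. -/
def infl {E I : Type} {K : I → Type} : Mut E I K → Set (E × I)
  | .attach i e _ => {(e, i)}
  | .detach i e => {(e, i)}
  | .comp m m' => infl m ∪ infl m'
  | .nil => ∅
  | .nu f => ⋂ e : E, infl (f e)

/-- A mutation contains no occurrence of the `ν` constructor. -/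
def NuFree {E I : Type} {K : I → Type} : Mut E I K → Prop
  | .attach _ _ _ => True
  | .detach _ _ => True
  | .comp m m' => NuFree m ∧ NuFree m'
  | .nil => True
  | .nu _ => False

/-- Queries. -/
inductive Query (I : Type) : Type where
  | incl : I → Query I
  | excl : I → Query I
  | anyway : I → Query I
  | conj : Query I → Query I → Query I

/-- The component-result type of a query. -/
def QueryT {I : Type} (K : I → Type) : Query I → Type
  | .incl i => K i
  | .excl _ => Unit
  | .anyway i => K i ⊕ Unit
  | .conj q q' => QueryT K q × QueryT K q'

/-- Query semantics `⟦q⟧_c : E ⇀ QueryT q`. -/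
noncomputable def querySem {E I : Type} {K : I → Type} (c : ECSState E I K) :
    (q : Query I) → E → Option (QueryT K q)
  | .incl i, e => c.comp i e
  | .excl i, e => if e ∈ live c ∧ c.comp i e = none then some () else none
  | .anyway i, e =>
      if e ∈ live c then some ((c.comp i e).elim (Sum.inr ()) Sum.inl) else none
  | .conj q q', e =>
      (querySem c q e).bind fun a => (querySem c q' e).map fun b => (a, b)

/-- A system: a query vector together with a system function producing a mutation. -/
structure System (E I : Type) (K : I → Type) : Type where
  n : ℕ
  q : Fin n → Query I
  f : (Fin n → E) → ((j : Fin n) → QueryT K (q j)) → Mut E I K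

/-- An entity match of a system: an entity vector with its component-result vector. -/
abbrev Match {E I : Type} {K : I → Type} (s : System E I K) : Type :=
  (Fin s.n → E) × ((j : Fin s.n) → QueryT K (s.q j))

/-- The query-vector semantics `⟦q_s⟧_c` of a system, as the set of its entity
matches (the cartesian product of the constituent query results). -/
def matchSem {E I : Type} {K : I → Type} (c : ECSState E I K) (s : System E I K) :
    Set (Match s) :=
  {r | ∀ j, querySem c (s.q j) (r.1 j) = some (r.2 j)}

/-- An enumeration giving the "consistent but unspecified total order" on the
entity matches of each system at each state. -/
abbrev MatchEnum (E I : Type) (K : I → Type) : Type :=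
  (s : System E I K) → ECSState E I K → List (Match s)

/-- A valid enumeration lists, without duplicates, exactly the entity matches. -/
def ValidEnum {E I : Type} {K : I → Type} (en : MatchEnum E I K) : Prop :=
  ∀ (s : System E I K) (c : ECSState E I K),
    (en s c).Nodup ∧ ∀ r : Match s, r ∈ en s c ↔ r ∈ matchSem c s

/-- Re-evaluate the query vector of `s` on the entity vector `ev` at state `c`. -/
noncomputable def refresh {E I : Type} {K : I → Type} (c : ECSState E I K)
    (s : System E I K) (ev : Fin s.n → E) :
    Option ((j : Fin s.n) → QueryT K (s.q j)) :=
  if h : ∀ j, (querySem c (s.q j) (ev j)).isSome then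
    some fun j => (querySem c (s.q j) (ev j)).get (h j)
  else none

/-- `roll_s(c, r)`: process the ordered entity matches, re-evaluating the query
vector at the current state, dropping vanished matches, refreshing component
results, and advancing the state by each produced mutation. -/
noncomputable def roll {E I : Type} {K : I → Type} (φ : FreshOracle E I K)
    (s : System E I K) : ECSState E I K → List (Match s) → List (Match s)
  | _, [] => []
  | c, r :: rest =>
    match refresh c s r.1 with
    | none => roll φ s c rest
    | some w => (r.1, w) :: roll φ s (applyMut φ c (s.f r.1 w)) rest

/-- Apply a system to an ordered collection of matches: `f_s(r₁) • … • f_s(rₙ)`. -/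
def applySys {E I : Type} {K : I → Type} (s : System E I K) (l : List (Match s)) :
    Mut E I K :=
  (l.map fun r => s.f r.1 r.2).foldr Mut.comp Mut.nil

/-- Schedules: `conc(s) | seq(s) | z ∥ z' | z ⨟ z'`. -/
inductive Schedule (E I : Type) (K : I → Type) : Type where
  | conc : System E I K → Schedule E I K
  | seq : System E I K → Schedule E I K
  | par : Schedule E I K → Schedule E I K → Schedule E I K
  | andThen : Schedule E I K → Schedule E I K → Schedule E I K

/-- Interpretation `c ⇓ z` of a schedule at a state, yielding a mutation. -/
noncomputable def interp {E I : Type} {K : I → Type} (φ : FreshOracle E I K)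
    (en : MatchEnum E I K) : ECSState E I K → Schedule E I K → Mut E I K
  | c, .conc s => applySys s (en s c)
  | c, .seq s => applySys s (roll φ s c (en s c))
  | c, .par z z' => Mut.comp (interp φ en c z) (interp φ en c z')
  | c, .andThen z z' =>
      Mut.comp (interp φ en c z) (interp φ en (applyMut φ c (interp φ en c z)) z')

/-- Schedule application `z(c) = c ↓ (c ⇓ z)`. -/
noncomputable def schedApp {E I : Type} {K : I → Type} (φ : FreshOracle E I K)
    (en : MatchEnum E I K) (c : ECSState E I K) (z : Schedule E I K) : ECSState E I K :=
  applyMut φ c (interp φ en c z)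

/-- A system-function invocation `(f_s, r)`: a system together with an entity match. -/
abbrev Inv (E I : Type) (K : I → Type) : Type := (s : System E I K) × Match s

/-- The mutation `f_s(r)` produced by an invocation. -/
def invMut {E I : Type} {K : I → Type} (u : Inv E I K) : Mut E I K :=
  u.1.f u.2.1 u.2.2

/-- The set `po_c(z)` of system-function invocations of a schedule at a state. -/
noncomputable def po {E I : Type} {K : I → Type} (φ : FreshOracle E I K)
    (en : MatchEnum E I K) : ECSState E I K → Schedule E I K → Set (Inv E I K)
  | c, .conc s => {u | ∃ r ∈ en s c, u = ⟨s, r⟩}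
  | c, .seq s => {u | ∃ r ∈ roll φ s c (en s c), u = ⟨s, r⟩}
  | c, .par z z' => po φ en c z ∪ po φ en c z'
  | c, .andThen z z' => po φ en c z ∪ po φ en (schedApp φ en c z) z'

/-- `a` occurs no later than `b` in the list `L`. -/
def listLE {α : Type*} (L : List α) (a b : α) : Prop :=
  ∃ i j : Fin L.length, i ≤ j ∧ L.get i = a ∧ L.get j = b

/-- The order `≼_z` on invocations of schedule `z` at state `c`. -/
noncomputable def prec {E I : Type} {K : I → Type} (φ : FreshOracle E I K)
    (en : MatchEnum E I K) :
    ECSState E I K → Schedule E I K → Inv E I K → Inv E I K → Prop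
  | _, .conc _ => fun u v => u = v
  | c, .seq s => fun u v =>
      listLE ((roll φ s c (en s c)).map fun r => (⟨s, r⟩ : Inv E I K)) u v
  | c, .par z z' => fun u v => prec φ en c z u v ∨ prec φ en c z' u v
  | c, .andThen z z' => fun u v =>
      prec φ en c z u v ∨ prec φ en (schedApp φ en c z) z' u v ∨
        (u ∈ po φ en c z ∧ v ∈ po φ en (schedApp φ en c z) z')

/-- Two invocations are concurrent when incomparable under the given order. -/
def ConcurrentPair {E I : Type} {K : I → Type}
    (ord : Inv E I K → Inv E I K → Prop) (u v : Inv E I K) : Prop :=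
  ¬ ord u v ∧ ¬ ord v u

/-- A schedule is safe at a state when every concurrent pair of its invocations
yields commuting mutations. -/
noncomputable def SafeAt {E I : Type} {K : I → Type} (φ : FreshOracle E I K)
    (en : MatchEnum E I K) (c : ECSState E I K) (z : Schedule E I K) : Prop :=
  ∀ u ∈ po φ en c z, ∀ v ∈ po φ en c z,
    ConcurrentPair (prec φ en c z) u v → MutCommute (invMut u) (invMut v)

/-- A linearization of a set of invocations respecting the order `ord`. -/
def IsLinearization {E I : Type} {K : I → Type} (S : Set (Inv E I K))
    (ord : Inv E I K → Inv E I K → Prop) (L : List (Inv E I K)) : Prop :=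
  L.Nodup ∧ (∀ u, u ∈ L ↔ u ∈ S) ∧ L.Pairwise fun u v => ¬ ord v u

/-- The composite mutation `f₁(r₁) • … • fₙ(rₙ)` of a linearization. -/
def compMut {E I : Type} {K : I → Type} (L : List (Inv E I K)) : Mut E I K :=
  (L.map invMut).foldr Mut.comp Mut.nil

/-- A schedule is deterministic at a state when all linearizations of `po_c(z)`
have equivalent composite mutations. -/
noncomputable def DeterministicAt {E I : Type} {K : I → Type} (φ : FreshOracle E I K)
    (en : MatchEnum E I K) (c : ECSState E I K) (z : Schedule E I K) : Prop :=
  ∀ L L' : List (Inv E I K),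
    IsLinearization (po φ en c z) (prec φ en c z) L →
    IsLinearization (po φ en c z) (prec φ en c z) L' →
    MutEquiv (compMut L) (compMut L')

/-- The influence `infl_c(z)` of a schedule at a state. -/
noncomputable def inflSched {E I : Type} {K : I → Type} (φ : FreshOracle E I K)
    (en : MatchEnum E I K) : ECSState E I K → Schedule E I K → Set (E × I)
  | c, .conc s => {p | ∃ r ∈ en s c, p ∈ infl (s.f r.1 r.2)}
  | c, .seq s => {p | ∃ r ∈ roll φ s c (en s c), p ∈ infl (s.f r.1 r.2)}
  | c, .par z z' => inflSched φ en c z ∪ inflSched φ en c z'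
  | c, .andThen z z' => inflSched φ en c z ∪ inflSched φ en (schedApp φ en c z) z'

end CoreECS

namespace CoreECS

/-- The set of used entities only grows along interpretation. -/
theorem used_mono {E I : Type} {K : I → Type} (φ : FreshOracle E I K) :
    ∀ (m : Mut E I K) (c : ECSState E I K), c.used ⊆ (applyMut φ c m).used := by
  intro m
  induction m with
  | attach i e k => intro c; exact subset_rfl
  | detach i e => intro c; exact subset_rfl
  | comp m m' ih ih' => intro c; exact (ih c).trans (ih' _)
  | nil => intro c; exact subset_rfl
  | nu f ih =>
      intro c
      simp only [applyMut]
      exact (Set.subset_insert (φ c) c.used).trans (ih (φ c) (c.markUsed (φ c)))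

/-- Oracles agreeing on all states whose used set contains `V` interpret a
mutation identically from any state whose used set contains `V`. -/
theorem agreeLow {E I : Type} {K : I → Type} (φ φ' : FreshOracle E I K) (V : Set E)
    (hagree : ∀ s : ECSState E I K, V ⊆ s.used → φ' s = φ s) :
    ∀ (m : Mut E I K) (c : ECSState E I K), V ⊆ c.used →
      applyMut φ' c m = applyMut φ c m := by
  intro m
  induction m with
  | attach i e k => intro c _; rfl
  | detach i e => intro c _; rfl
  | comp m m' ih ih' =>
      intro c hc
      simp only [applyMut]
      rw [ih c hc]
      exact ih' _ (hc.trans (used_mono φ m c))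
  | nil => intro c _; rfl
  | nu f ih =>
      intro c hc
      simp only [applyMut, hagree c hc]
      exact ih _ _ (hc.trans (Set.subset_insert _ _))

/-- Oracles agreeing on all states whose used set contains `V` but does not
contain `U` interpret a mutation identically, provided the run of the valid
oracle starts above `V` and ends below `U`. -/
theorem agreeBoth {E I : Type} {K : I → Type} (φ φ' : FreshOracle E I K)
    (hφ : ValidOracle φ) (V U : Set E)
    (hagree : ∀ s : ECSState E I K, V ⊆ s.used → ¬ U ⊆ s.used → φ' s = φ s) :
    ∀ (m : Mut E I K) (c : ECSState E I K), V ⊆ c.used →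
      (applyMut φ c m).used ⊆ U → applyMut φ' c m = applyMut φ c m := by
  intro m
  induction m with
  | attach i e k => intro c _ _; rfl
  | detach i e => intro c _ _; rfl
  | comp m m' ih ih' =>
      intro c hc hU
      simp only [applyMut] at hU ⊢
      rw [ih c hc ((used_mono φ m' _).trans hU)]
      exact ih' _ (hc.trans (used_mono φ m c)) hU
  | nil => intro c _ _; rfl
  | nu f ih =>
      intro c hc hU
      simp only [applyMut] at hU
      have hnot : ¬ U ⊆ c.used := by
        intro hsub
        exact (hφ c).2 (hsub (hU ((used_mono φ (f (φ c)) (c.markUsed (φ c)))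
          (Set.mem_insert _ _))))
      simp only [applyMut, hagree c hc hnot]
      exact ih _ _ (hc.trans (Set.subset_insert _ _)) hU

/-- Interpretation of the composite mutation of an appended list. -/
theorem applyMut_compMut_append {E I : Type} {K : I → Type} (φ : FreshOracle E I K)
    (X Y : List (Inv E I K)) (c : ECSState E I K) :
    applyMut φ c (compMut (X ++ Y)) =
      applyMut φ (applyMut φ c (compMut X)) (compMut Y) := by
  induction X generalizing c with
  | nil => rfl
  | cons a X ih =>
      simp only [List.cons_append, compMut, List.map_cons, List.foldr_cons, applyMut]
      exact ih _

/-- Let `z` be a schedule safe at state `c`, and let `L` and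
`L'` be two linearizations of `po_c(z)` that are identical except that two
adjacent invocations are swapped, both respecting `≼_z`.  Then the composite
mutations of `L` and `L'` are equivalent. -/
theorem adjacent_transposition_equiv {E I : Type} {K : I → Type}
    (φ : FreshOracle E I K) (en : MatchEnum E I K)
    (hφ : ValidOracle φ) (hen : ValidEnum en)
    (z : Schedule E I K) (c : ECSState E I K)
    (hsafe : SafeAt φ en c z)
    (A B : List (Inv E I K)) (u v : Inv E I K)
    (hL : IsLinearization (po φ en c z) (prec φ en c z) (A ++ u :: v :: B))
    (hL' : IsLinearization (po φ en c z) (prec φ en c z) (A ++ v :: u :: B)) :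
    MutEquiv (compMut (A ++ u :: v :: B)) (compMut (A ++ v :: u :: B)) := by
  classical
  have hu : u ∈ po φ en c z := (hL.2.1 u).mp (by simp)
  have hv : v ∈ po φ en c z := (hL.2.1 v).mp (by simp)
  have h1 : ¬ prec φ en c z v u := by
    have hp := hL.2.2
    rw [List.pairwise_append] at hp
    exact (List.pairwise_cons.mp hp.2.1).1 v (by simp)
  have h2 : ¬ prec φ en c z u v := by
    have hp := hL'.2.2
    rw [List.pairwise_append] at hp
    exact (List.pairwise_cons.mp hp.2.1).1 u (by simp)
  have hcomm : MutCommute (invMut u) (invMut v) := hsafe u hu v hv ⟨h2, h1⟩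
  intro w
  set d := applyMut φ w (compMut A) with hd
  obtain ⟨ψ, ψ', hψ, hψ', heq⟩ := hcomm d
  set e := applyMut ψ d ((invMut u).comp (invMut v)) with he
  set Φ : FreshOracle E I K :=
    fun s => if d.used ⊆ s.used ∧ ¬ e.used ⊆ s.used then ψ s else φ s with hΦdef
  set Φ' : FreshOracle E I K :=
    fun s => if d.used ⊆ s.used ∧ ¬ e.used ⊆ s.used then ψ' s else φ s with hΦ'def
  have hΦ : ValidOracle Φ := by
    intro s
    simp only [hΦdef]
    by_cases h : d.used ⊆ s.used ∧ ¬ e.used ⊆ s.used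
    · rw [if_pos h]; exact hψ s
    · rw [if_neg h]; exact hφ s
  have hΦ' : ValidOracle Φ' := by
    intro s
    simp only [hΦ'def]
    by_cases h : d.used ⊆ s.used ∧ ¬ e.used ⊆ s.used
    · rw [if_pos h]; exact hψ' s
    · rw [if_neg h]; exact hφ s
  refine ⟨Φ, Φ', hΦ, hΦ', ?_⟩
  -- agreement conditions
  have hlowΦ : ∀ s : ECSState E I K, ¬ d.used ⊆ s.used → Φ s = φ s := by
    intro s hs; simp only [hΦdef]; rw [if_neg (fun h => hs h.1)]
  have hlowΦ' : ∀ s : ECSState E I K, ¬ d.used ⊆ s.used → Φ' s = φ s := by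
    intro s hs; simp only [hΦ'def]; rw [if_neg (fun h => hs h.1)]
  have hmidΦ : ∀ s : ECSState E I K, d.used ⊆ s.used → ¬ e.used ⊆ s.used →
      Φ s = ψ s := by
    intro s h1 h2; simp only [hΦdef]; rw [if_pos ⟨h1, h2⟩]
  have hmidΦ' : ∀ s : ECSState E I K, d.used ⊆ s.used → ¬ e.used ⊆ s.used →
      Φ' s = ψ' s := by
    intro s h1 h2; simp only [hΦ'def]; rw [if_pos ⟨h1, h2⟩]
  have hhighΦ : ∀ s : ECSState E I K, e.used ⊆ s.used → Φ s = φ s := by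
    intro s hs; simp only [hΦdef]; rw [if_neg (fun h => h.2 hs)]
  have hhighΦ' : ∀ s : ECSState E I K, e.used ⊆ s.used → Φ' s = φ s := by
    intro s hs; simp only [hΦ'def]; rw [if_neg (fun h => h.2 hs)]
  -- prefix A
  have hpre : applyMut Φ w (compMut A) = d := by
    refine agreeBoth φ Φ hφ ∅ d.used ?_ (compMut A) w (Set.empty_subset _) subset_rfl
    intro s _ hs; exact hlowΦ s hs
  have hpre' : applyMut Φ' w (compMut A) = d := by
    refine agreeBoth φ Φ' hφ ∅ d.used ?_ (compMut A) w (Set.empty_subset _) subset_rfl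
    intro s _ hs; exact hlowΦ' s hs
  -- middle swap
  have hde : d.used ⊆ e.used := used_mono ψ _ d
  have hmid : applyMut Φ d ((invMut u).comp (invMut v)) = e := by
    refine agreeBoth ψ Φ hψ d.used e.used hmidΦ _ d subset_rfl subset_rfl
  have hmid' : applyMut Φ' d ((invMut v).comp (invMut u)) = e := by
    have := agreeBoth ψ' Φ' hψ' d.used e.used hmidΦ'
      ((invMut v).comp (invMut u)) d subset_rfl (by rw [← heq])
    rw [this, ← heq]
  -- suffix B
  have hsuf : applyMut Φ e (compMut B) = applyMut φ e (compMut B) :=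
    agreeLow φ Φ e.used hhighΦ (compMut B) e subset_rfl
  have hsuf' : applyMut Φ' e (compMut B) = applyMut φ e (compMut B) :=
    agreeLow φ Φ' e.used hhighΦ' (compMut B) e subset_rfl
  calc applyMut Φ w (compMut (A ++ u :: v :: B))
      = applyMut Φ (applyMut Φ w (compMut A)) (compMut (u :: v :: B)) :=
        applyMut_compMut_append Φ A _ w
    _ = applyMut Φ (applyMut Φ d ((invMut u).comp (invMut v))) (compMut B) := by
        rw [hpre]; simp only [compMut, List.map_cons, List.foldr_cons, applyMut]
    _ = applyMut φ e (compMut B) := by rw [hmid, hsuf]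
    _ = applyMut Φ' (applyMut Φ' d ((invMut v).comp (invMut u))) (compMut B) := by
        rw [hmid', hsuf']
    _ = applyMut Φ' (applyMut Φ' w (compMut A)) (compMut (v :: u :: B)) := by
        rw [hpre']; simp only [compMut, List.map_cons, List.foldr_cons, applyMut]
    _ = applyMut Φ' w (compMut (A ++ v :: u :: B)) :=
        (applyMut_compMut_append Φ' A _ w).symm

end CoreECS
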